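/- arXiv:1205.1879 — 3 statements merged into one kernel-verified Lean document; each statement's English description precedes it below -/
import Mathlib

section
/- For the exponential potential V_b(q) = e^{-bq} - 1 + bq and the product measure μ_{β̄,λ̄} with marginal density Z̄^{-1} exp(-β̄ e^{-bq} - λ̄ q), the mean energy current is ⟨j̄_{x,x+1}⟩ = -b²(ē - b v̄)² + b² and the mean volume current is ⟨j̄'_{x,x+1}⟩ = 2b(ē - b v̄ + 1), where ē = ⟨V_b(η_0)⟩ and v̄ = ⟨η_0⟩, j̄_{x,x+1}(η) = -b² e^{-b(η_x + η_{x+1})} + b²(e^{-bη_x} + e^{-bη_{x+1}}) - γ(V_b(η_{x+1}) - V_b(η_x)), and j̄'_{x,x+1}(η) = b e^{-bη_x} + b e^{-bη_{x+1}} - γ(η_{x+1} - η_x). -/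
/-!
Under `μ` the pair `(η_x, η_{x+1})` is i.i.d. with the Gibbs marginal as common law. The `γ`-terms
of both currents are antisymmetric under swapping the pair, so they average to zero. Writing
`e^{-bq} = (V_b(q) - bq) + 1`, the remaining terms are sums and products of the one-site variable
`V_b(q) - bq`, whose mean is `ē - b v̄`. All one-site integrals are finite: `e^{tq}` times the
Gibbs weight with parameter `λ̄` is the Gibbs weight with parameter `λ̄ - t`, which is integrable for
`t < λ̄` (Gaussian decay on `q ≤ 0`, exponential decay on `q > 0`).
-/

open MeasureTheory Real Set

theorem ENNReal.eq_one_of_mul_self_eq_one {x : ENNReal} (h : x * x = 1) : x = 1 := by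
  have hx : x ≠ ⊤ := (ENNReal.mul_self_lt_top_iff.1 (h ▸ ENNReal.one_lt_top)).ne
  have hreal := congrArg ENNReal.toReal h
  rw [ENNReal.toReal_mul, ENNReal.toReal_one] at hreal
  rw [← ENNReal.toReal_eq_one_iff]
  nlinarith [ENNReal.toReal_nonneg (a := x)]

namespace MeasureTheory

variable {α : Type*} [MeasurableSpace α] {μ ν : Measure α}

theorem isProbabilityMeasure_of_prod_self [SFinite ν] (h : IsProbabilityMeasure (ν.prod ν)) :
    IsProbabilityMeasure ν := by
  refine ⟨ENNReal.eq_one_of_mul_self_eq_one ?_⟩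
  rw [← Measure.prod_prod, univ_prod_univ, measure_univ]

theorem integrable_withDensity_ofReal_of_integrable_mul {f g : α → ℝ} (hf : Measurable f)
    (hg : Measurable g) (hgf : Integrable (fun x => g x * f x) μ) :
    Integrable g (μ.withDensity fun x => ENNReal.ofReal (f x)) := by
  rw [integrable_withDensity_iff hf.ennreal_ofReal (ae_of_all _ fun _ => ENNReal.ofReal_lt_top)]
  refine hgf.mono (by fun_prop) (ae_of_all _ fun x => ?_)
  rw [ENNReal.toReal_ofReal', norm_mul, norm_mul]
  gcongr
  rw [Real.norm_of_nonneg (le_max_right _ _)]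
  exact max_le (le_abs_self _) (abs_nonneg _)

theorem integral_sub_swap_prod_self [SFinite ν] (g : α → ℝ) :
    ∫ p, (g p.2 - g p.1) ∂ν.prod ν = 0 := by
  have hswap := integral_prod_swap (μ := ν) (ν := ν) fun p => g p.2 - g p.1
  have hneg : ∫ p, (g p.1 - g p.2) ∂ν.prod ν = -∫ p, (g p.2 - g p.1) ∂ν.prod ν := by
    rw [← integral_neg]
    simp only [neg_sub]
  simp only [Prod.fst_swap, Prod.snd_swap] at hswap
  linarith

theorem integral_fst_add_snd_prod_self [IsProbabilityMeasure ν] {f : α → ℝ}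
    (hf : Integrable f ν) : ∫ p, (f p.1 + f p.2) ∂ν.prod ν = 2 * ∫ x, f x ∂ν := by
  rw [integral_add (hf.comp_fst ν) (hf.comp_snd ν), integral_fun_fst, integral_fun_snd]
  simp only [probReal_univ, one_smul]
  ring

end MeasureTheory

theorem integrable_exp_neg_mul_exp_sub_mul {b β c : ℝ} (hb : 0 < b) (hβ : 0 < β) (hc : 0 < c) :
    Integrable fun q : ℝ => exp (-β * exp (-b * q) - c * q) := by
  have hmeas : AEStronglyMeasurable (fun q : ℝ => exp (-β * exp (-b * q) - c * q)) := by
    fun_prop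
  rw [← integrableOn_univ, ← Iic_union_Ioi (a := (0 : ℝ))]
  refine IntegrableOn.union ?_ ?_
  · set a := β * b ^ 2 / 4 with ha_def
    have ha : 0 < a := by positivity
    refine (((integrable_exp_neg_mul_sq ha).const_mul (exp (c ^ 2 / (4 * a)))).integrableOn.mono'
      hmeas.restrict ?_)
    filter_upwards [ae_restrict_mem measurableSet_Iic] with q hq
    rw [Real.norm_of_nonneg (exp_pos _).le, ← exp_add, exp_le_exp]
    have hbq : 0 ≤ -b * q := by nlinarith [mem_Iic.1 hq]
    have hquad : 2 * a * q ^ 2 ≤ β * exp (-b * q) := by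
      have hexp := quadratic_le_exp_of_nonneg hbq
      have hscale : 2 * a * q ^ 2 = β * ((-b * q) ^ 2 / 2) := by rw [ha_def]; ring
      rw [hscale]
      gcongr
      linarith
    have hsq : a * q ^ 2 + c * q + c ^ 2 / (4 * a) = (2 * a * q + c) ^ 2 / (4 * a) := by
      field_simp
      ring
    have hsq_nonneg : 0 ≤ (2 * a * q + c) ^ 2 / (4 * a) := by positivity
    linarith
  · refine (exp_neg_integrableOn_Ioi 0 hc).mono' hmeas.restrict (ae_of_all _ fun q => ?_)
    rw [Real.norm_of_nonneg (exp_pos _).le, exp_le_exp]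
    nlinarith [exp_pos (-b * q)]

theorem integrable_exp_mul_gibbsMarginal {b β lam t : ℝ} (hb : 0 < b) (hβ : 0 < β)
    (ht : t < lam) (Z : ℝ) :
    Integrable (fun q => exp (t * q)) (volume.withDensity fun q : ℝ =>
      ENNReal.ofReal (Z⁻¹ * exp (-β * exp (-b * q) - lam * q))) := by
  refine integrable_withDensity_ofReal_of_integrable_mul (by fun_prop) (by fun_prop) ?_
  have hweight : (fun q => exp (t * q) * (Z⁻¹ * exp (-β * exp (-b * q) - lam * q))) =
      fun q => Z⁻¹ * exp (-β * exp (-b * q) - (lam - t) * q) := by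
    funext q
    rw [mul_left_comm, ← exp_add]
    ring_nf
  rw [hweight]
  exact (integrable_exp_neg_mul_exp_sub_mul hb hβ (sub_pos.2 ht)).const_mul _

noncomputable def expPotential (b q : ℝ) : ℝ := exp (-b * q) - 1 + b * q

-- The currents `j̄_{x,x+1}` and `j̄'_{x,x+1}` as functions of `p = (η_x, η_{x+1})`.
noncomputable def energyCurrent (b γ : ℝ) (p : ℝ × ℝ) : ℝ :=
  -b ^ 2 * exp (-b * (p.1 + p.2)) + b ^ 2 * (exp (-b * p.1) + exp (-b * p.2))
    - γ * (expPotential b p.2 - expPotential b p.1)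

noncomputable def volumeCurrent (b γ : ℝ) (p : ℝ × ℝ) : ℝ :=
  b * exp (-b * p.1) + b * exp (-b * p.2) - γ * (p.2 - p.1)

theorem energyCurrent_eq (b γ : ℝ) (p : ℝ × ℝ) :
    energyCurrent b γ p = b ^ 2 - b ^ 2 * ((expPotential b p.1 - b * p.1) *
      (expPotential b p.2 - b * p.2)) - γ * (expPotential b p.2 - expPotential b p.1) := by
  simp only [energyCurrent, expPotential, mul_add, exp_add]
  ring

theorem volumeCurrent_eq (b γ : ℝ) (p : ℝ × ℝ) :
    volumeCurrent b γ p = 2 * b + b * ((expPotential b p.1 - b * p.1) +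
      (expPotential b p.2 - b * p.2)) - γ * (p.2 - p.1) := by
  simp only [volumeCurrent, expPotential]
  ring

section MeanCurrents

variable {ν : Measure ℝ} {b : ℝ}

theorem integral_expPotential_sub_mul (hV : Integrable (expPotential b) ν)
    (hq : Integrable (fun q => q) ν) :
    ∫ q, (expPotential b q - b * q) ∂ν = (∫ q, expPotential b q ∂ν) - b * ∫ q, q ∂ν := by
  rw [integral_sub hV (hq.const_mul b), integral_const_mul]

variable [IsProbabilityMeasure ν]

theorem integral_energyCurrent_prod_self (γ : ℝ) (hV : Integrable (expPotential b) ν)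
    (hq : Integrable (fun q => q) ν) :
    ∫ p, energyCurrent b γ p ∂ν.prod ν
      = -b ^ 2 * ((∫ q, expPotential b q ∂ν) - b * ∫ q, q ∂ν) ^ 2 + b ^ 2 := by
  have hw : Integrable (fun q => expPotential b q - b * q) ν := hV.sub (hq.const_mul b)
  have hprod : Integrable (fun p : ℝ × ℝ => b ^ 2 *
      ((expPotential b p.1 - b * p.1) * (expPotential b p.2 - b * p.2))) (ν.prod ν) :=
    (hw.mul_prod hw).const_mul _
  have hdiff : Integrable (fun p : ℝ × ℝ => γ * (expPotential b p.2 - expPotential b p.1))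
      (ν.prod ν) :=
    ((hV.comp_snd ν).sub (hV.comp_fst ν)).const_mul γ
  simp only [energyCurrent_eq]
  rw [integral_sub ((integrable_const _).sub' hprod) hdiff,
    integral_sub (integrable_const _) hprod, integral_const, integral_const_mul (b ^ 2),
    integral_prod_mul (fun q => expPotential b q - b * q) (fun q => expPotential b q - b * q),
    integral_const_mul γ, integral_sub_swap_prod_self, integral_expPotential_sub_mul hV hq]
  simp only [probReal_univ, one_smul]
  ring

theorem integral_volumeCurrent_prod_self (γ : ℝ) (hV : Integrable (expPotential b) ν)
    (hq : Integrable (fun q => q) ν) :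
    ∫ p, volumeCurrent b γ p ∂ν.prod ν
      = 2 * b * ((∫ q, expPotential b q ∂ν) - b * ∫ q, q ∂ν + 1) := by
  have hw : Integrable (fun q => expPotential b q - b * q) ν := hV.sub (hq.const_mul b)
  have hsum : Integrable (fun p : ℝ × ℝ =>
      b * ((expPotential b p.1 - b * p.1) + (expPotential b p.2 - b * p.2))) (ν.prod ν) :=
    ((hw.comp_fst ν).add (hw.comp_snd ν)).const_mul b
  have hdiff : Integrable (fun p : ℝ × ℝ => γ * (p.2 - p.1)) (ν.prod ν) :=
    ((hq.comp_snd ν).sub (hq.comp_fst ν)).const_mul γ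
  have hconst_add : Integrable (fun p : ℝ × ℝ =>
      2 * b + b * ((expPotential b p.1 - b * p.1) + (expPotential b p.2 - b * p.2))) (ν.prod ν) :=
    (integrable_const _).add hsum
  simp only [volumeCurrent_eq]
  rw [integral_sub hconst_add hdiff,
    integral_add (integrable_const _) hsum, integral_const,
    integral_const_mul b, integral_fst_add_snd_prod_self hw, integral_const_mul γ,
    integral_sub_swap_prod_self (fun q => q), integral_expPotential_sub_mul hV hq]
  simp only [probReal_univ, one_smul]
  ring

end MeanCurrents

theorem stmt8_general (b beta lam γ : ℝ) (hb : 0 < b) (hbeta : 0 < beta) (hlam : 0 < lam)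
    (Z : ℝ)
    (marg : Measure ℝ)
    (hmarg : marg = volume.withDensity (fun q : ℝ =>
      ENNReal.ofReal (Z⁻¹ * Real.exp (-beta * Real.exp (-b * q) - lam * q))))
    (V : ℝ → ℝ) (hV : ∀ q, V q = Real.exp (-b * q) - 1 + b * q)
    (ebar vbar : ℝ)
    (he : ebar = ∫ q, V q ∂marg) (hv : vbar = ∫ q, q ∂marg)
    (μ : Measure (ℤ → ℝ)) [IsProbabilityMeasure μ]
    -- product structure: any two neighboring coordinates are i.i.d. with law `marg`
    (hμ : ∀ x : ℤ, Measure.map (fun η : ℤ → ℝ => (η x, η (x + 1))) μ = marg.prod marg) :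
    ∀ x : ℤ,
      (∫ η : ℤ → ℝ,
          (-b ^ 2 * Real.exp (-b * (η x + η (x + 1)))
            + b ^ 2 * (Real.exp (-b * η x) + Real.exp (-b * η (x + 1)))
            - γ * (V (η (x + 1)) - V (η x))) ∂μ)
        = -b ^ 2 * (ebar - b * vbar) ^ 2 + b ^ 2 ∧
      (∫ η : ℤ → ℝ,
          (b * Real.exp (-b * η x) + b * Real.exp (-b * η (x + 1))
            - γ * (η (x + 1) - η x)) ∂μ)
        = 2 * b * (ebar - b * vbar + 1) := by
  obtain rfl : V = expPotential b := funext hV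
  subst he hv
  intro x
  have hpair (F : ℝ × ℝ → ℝ) (hF : Measurable F) :
      ∫ η, F (η x, η (x + 1)) ∂μ = ∫ p, F p ∂marg.prod marg := by
    rw [← hμ x, integral_map (by fun_prop) hF.aestronglyMeasurable]
  have : SFinite marg := hmarg ▸ inferInstance
  have : IsProbabilityMeasure marg :=
    isProbabilityMeasure_of_prod_self (hμ 0 ▸ Measure.isProbabilityMeasure_map (by fun_prop))
  have hexp (t : ℝ) (ht : t < lam) : Integrable (fun q => exp (t * q)) marg :=
    hmarg ▸ integrable_exp_mul_gibbsMarginal hb hbeta ht Z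
  have hq : Integrable (fun q => q) marg := by
    simpa using ProbabilityTheory.integrable_pow_of_integrable_exp_mul (half_pos hlam).ne'
      (hexp _ (half_lt_self hlam)) (hexp _ (by linarith)) 1
  have hpot : Integrable (expPotential b) marg :=
    ((hexp (-b) (by linarith)).sub (integrable_const 1)).add (hq.const_mul b)
  exact ⟨(hpair _ (by unfold energyCurrent expPotential; fun_prop)).trans
      (integral_energyCurrent_prod_self γ hpot hq),
    (hpair _ (by unfold volumeCurrent; fun_prop)).trans
      (integral_volumeCurrent_prod_self γ hpot hq)⟩

/-- Mean currents for the exponential model: with `V_b(q) = e^{-bq} - 1 + bq` and the product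
Gibbs measure `μ_{β̄,λ̄}` with one-site density `Z̄⁻¹ exp(-β̄ e^{-bq} - λ̄ q)`, the mean energy
current equals `-b²(ē - b v̄)² + b²` and the mean volume current equals `2b(ē - b v̄ + 1)`. -/
theorem stmt8 (b beta lam γ : ℝ) (hb : 0 < b) (hbeta : 0 < beta) (hlam : 0 < lam)
    (hγ : 0 < γ)
    (Z : ℝ) (hZ : Z = ∫ q : ℝ, Real.exp (-beta * Real.exp (-b * q) - lam * q))
    (marg : Measure ℝ)
    (hmarg : marg = volume.withDensity (fun q : ℝ =>
      ENNReal.ofReal (Z⁻¹ * Real.exp (-beta * Real.exp (-b * q) - lam * q))))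
    (V : ℝ → ℝ) (hV : ∀ q, V q = Real.exp (-b * q) - 1 + b * q)
    (ebar vbar : ℝ)
    (he : ebar = ∫ q, V q ∂marg) (hv : vbar = ∫ q, q ∂marg)
    (μ : Measure (ℤ → ℝ)) [IsProbabilityMeasure μ]
    -- product structure: any two neighboring coordinates are i.i.d. with law `marg`
    (hμ : ∀ x : ℤ, Measure.map (fun η : ℤ → ℝ => (η x, η (x + 1))) μ = marg.prod marg) :
    ∀ x : ℤ,
      (∫ η : ℤ → ℝ,
          (-b ^ 2 * Real.exp (-b * (η x + η (x + 1)))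
            + b ^ 2 * (Real.exp (-b * η x) + Real.exp (-b * η (x + 1)))
            - γ * (V (η (x + 1)) - V (η x))) ∂μ)
        = -b ^ 2 * (ebar - b * vbar) ^ 2 + b ^ 2 ∧
      (∫ η : ℤ → ℝ,
          (b * Real.exp (-b * η x) + b * Real.exp (-b * η (x + 1))
            - γ * (η (x + 1) - η x)) ∂μ)
        = 2 * b * (ebar - b * vbar + 1) :=
  stmt8_general b beta lam γ hb hbeta hlam Z marg hmarg V hV ebar vbar he hv μ hμ
end

section
/- Let F: ℤ² → ℝ be a finitely supported symmetric function and define F̄: ℕ → ℝ by F̄(α) = Σ_{z ∈ ℤ} F(z, z+α). Let (𝔖F)(x,y) = Σ_{u∈ℤ} [F applied to the configuration with occupation exchanged at bond (u,u+1)] - F(x,y), the exchange generator. Then the barred image satisfies: (𝔖F)^bar(0) = 0, (𝔖F)^bar(1) = 2(F̄(2) - F̄(1)), and for α ≥ 2, (𝔖F)^bar(α) = 2(F̄(α+1) - F̄(α)) + 2(F̄(α-1) - F̄(α)). Consequently there exists a constant C > 0 (independent of F) with C^{-1} Σ_{x,y ≥ 1, |x-y|=1} (F̄(y) - F̄(x))²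 ≤ Σ_{α ∈ ℕ} F̄(α) · (-(𝔖F)^bar)(α) ≤ C Σ_{x,y ≥ 1, |x-y|=1} (F̄(y) - F̄(x))². -/
/-- The exchange generator `𝔖` acting on a symmetric two-particle function `F : ℤ² → ℝ`,
written in coordinates: `(𝔖F)(x,y) = Σ_u [F(σ^{u,u+1}) - F(σ)]` for `σ = δ_x + δ_y`. -/
noncomputable def exchGen (F : ℤ → ℤ → ℝ) (x y : ℤ) : ℝ :=
  if x = y then F (x - 1) (x - 1) + F (x + 1) (x + 1) - 2 * F x x
  else if y = x + 1 then F (x - 1) (x + 1) + F x (x + 2) - 2 * F x (x + 1)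
  else if x = y + 1 then F (y - 1) (y + 1) + F y (y + 2) - 2 * F y (y + 1)
  else F (x - 1) y + F (x + 1) y + F x (y - 1) + F x (y + 1) - 4 * F x y

/-- `F̄(α) = Σ_{z∈ℤ} F(z, z+α)`. -/
noncomputable def barOf (F : ℤ → ℤ → ℝ) (α : ℕ) : ℝ := ∑ᶠ z : ℤ, F z (z + α)

/-!
Summed along a diagonal `z ↦ (z, z + α)`, every nearest-neighbour move in `exchGen` becomes a
translate of a diagonal sum, and `Σ_z` is translation invariant. Hence `(𝔖F)‾ = L F̄`, where
`L` is the nearest-neighbour Laplacian (rate 2) on the gaps `α ≥ 1` with reflection at `1`,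
the gap `0` being frozen. Summation by parts gives
`Σ_α F̄(α) (-L F̄)(α) = 2 Σ_{α ≥ 1} (F̄(α+1) - F̄(α))²`, and the nearest-neighbour sum counts
each bond once in each orientation, so it is the same quantity: the comparison holds with
`C = 1`, with equality on both sides.
-/

open Function Finset

section Support

variable {α β M : Type*} [AddCommMonoid M] {f : β → M} {e : α → β}

lemma finsum_eq_finsum_comp_of_support_subset_range (he : Injective e)
    (hf : support f ⊆ Set.range e) : ∑ᶠ b, f b = ∑ᶠ a, f (e a) := by
  rw [← finsum_mem_range he, ← finsum_mem_univ]
  exact finsum_mem_inter_support_eq' f _ _ fun b hb => by simpa using hf hb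

lemma HasFiniteSupport.of_comp_of_support_subset_range (h : HasFiniteSupport (f ∘ e))
    (hf : support f ⊆ Set.range e) : HasFiniteSupport f :=
  (h.image e).subset fun b hb => by
    obtain ⟨a, rfl⟩ := hf hb
    exact ⟨a, hb, rfl⟩

end Support

noncomputable def gapGen (g : ℕ → ℝ) : ℕ → ℝ
  | 0 => 0
  | 1 => 2 * (g 2 - g 1)
  | α + 2 => 2 * (g (α + 3) - g (α + 2)) + 2 * (g (α + 1) - g (α + 2))

lemma finsum_diag_shift (F : ℤ → ℤ → ℝ) (a c : ℤ) :
    ∑ᶠ z, F (z + a) (z + (a + c)) = ∑ᶠ z, F z (z + c) :=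
  finsum_eq_of_bijective _ (Equiv.addRight a).bijective fun z => by simp [add_assoc]

section Diagonal

variable {F : ℤ → ℤ → ℝ}

theorem barOf_exchGen (hF : HasFiniteSupport fun p : ℤ × ℤ => F p.1 p.2) :
    barOf (exchGen F) = gapGen (barOf F) := by
  funext α
  -- Every term is written as `F (z + a) (z + (a + c))`, a translate of the diagonal of gap `c`.
  rcases α with _ | _ | α
  · calc barOf (exchGen F) 0
        = ∑ᶠ z, (F (z + -1) (z + (-1 + 0)) + F (z + 1) (z + (1 + 0)) - 2 * F z (z + 0)) :=
          finsum_congr fun z => by simp [exchGen, sub_eq_add_neg]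
      _ = barOf F 0 + barOf F 0 - 2 * barOf F 0 := by
          rw [finsum_sub_distrib, finsum_add_distrib, ← mul_finsum, finsum_diag_shift,
            finsum_diag_shift]
          · rfl
          all_goals fun_prop (disch := intro x y h; simp_all)
      _ = gapGen (barOf F) 0 := by simp [gapGen]; ring
  · calc barOf (exchGen F) 1
        = ∑ᶠ z, (F (z + -1) (z + (-1 + 2)) + F z (z + 2) - 2 * F z (z + 1)) :=
          finsum_congr fun z => by simp [exchGen, sub_eq_add_neg]
      _ = barOf F 2 + barOf F 2 - 2 * barOf F 1 := by
          rw [finsum_sub_distrib, finsum_add_distrib, ← mul_finsum, finsum_diag_shift]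
          · rfl
          all_goals fun_prop (disch := intro x y h; simp_all)
      _ = gapGen (barOf F) 1 := by simp [gapGen]; ring
  · calc barOf (exchGen F) (α + 2)
        = ∑ᶠ z, (F (z + -1) (z + (-1 + ↑(α + 3))) + F (z + 1) (z + (1 + ↑(α + 1)))
            + F z (z + ↑(α + 1)) + F z (z + ↑(α + 3)) - 4 * F z (z + ↑(α + 2))) :=
          finsum_congr fun z => by
            rw [exchGen, if_neg (by omega), if_neg (by omega), if_neg (by omega)]
            push_cast; ring_nf
      _ = barOf F (α + 3) + barOf F (α + 1) + barOf F (α + 1) + barOf F (α + 3)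
            - 4 * barOf F (α + 2) := by
          rw [finsum_sub_distrib, finsum_add_distrib, finsum_add_distrib, finsum_add_distrib,
            ← mul_finsum, finsum_diag_shift, finsum_diag_shift]
          · rfl
          all_goals fun_prop (disch := intro x y h; simp_all)
      _ = gapGen (barOf F) (α + 2) := by simp only [gapGen]; ring

lemma hasFiniteSupport_barOf (hF : HasFiniteSupport fun p : ℤ × ℤ => F p.1 p.2) :
    HasFiniteSupport (barOf F) :=
  (hF.image fun p => (p.2 - p.1).toNat).subset fun α hα => by
    obtain ⟨z, hz⟩ : ∃ z, F z (z + α) ≠ 0 := by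
      by_contra! h
      exact hα (finsum_eq_zero_of_forall_eq_zero h)
    exact ⟨(z, z + α), hz, by simp⟩

end Diagonal

lemma sum_range_mul_neg_gapGen (g : ℕ → ℝ) (n : ℕ) :
    ∑ α ∈ range (n + 2), g α * -gapGen g α
      = 2 * ∑ k ∈ range (n + 1), (g (k + 2) - g (k + 1)) ^ 2
        + 2 * g (n + 2) * (g (n + 1) - g (n + 2)) := by
  induction n with
  | zero => simp [sum_range_succ, gapGen]; ring
  | succ n ih =>
    rw [sum_range_succ, ih, sum_range_succ (n := n + 1)]
    simp only [gapGen]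
    ring

section Gap

variable {g : ℕ → ℝ}

theorem finsum_mul_neg_gapGen (hg : HasFiniteSupport g) :
    ∑ᶠ α, g α * -gapGen g α = 2 * ∑ᶠ k, (g (k + 2) - g (k + 1)) ^ 2 := by
  obtain ⟨N, hN⟩ := hg.toFinset.exists_nat_subset_range
  have hzero : ∀ α, N ≤ α → g α = 0 := fun α hα => by
    by_contra h
    have := mem_range.1 (hN (hg.mem_toFinset.2 h))
    omega
  rw [finsum_eq_sum_of_support_subset _ (s := range (N + 2)) fun α hα => ?_,
    finsum_eq_sum_of_support_subset _ (s := range (N + 1)) fun k hk => ?_,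
    sum_range_mul_neg_gapGen, hzero (N + 2) (by omega)]
  · ring
  · by_contra h
    exact hk (by simp [hzero (k + 1) (by simp at h; omega), hzero (k + 2) (by simp at h; omega)])
  · by_contra h
    exact hα (by simp [hzero α (by simp at h; omega)])

noncomputable def bondSq (g : ℕ → ℝ) (p : ℕ × ℕ) : ℝ :=
  if 1 ≤ p.1 ∧ p.2 = p.1 + 1 then (g p.2 - g p.1) ^ 2 else 0

lemma support_bondSq_subset : support (bondSq g) ⊆ Set.range fun k => (k + 1, k + 2) := by
  intro p hp
  by_cases h : 1 ≤ p.1 ∧ p.2 = p.1 + 1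
  · exact ⟨p.1 - 1, by ext <;> simp <;> omega⟩
  · simp [bondSq, h] at hp

lemma finsum_bondSq : ∑ᶠ p, bondSq g p = ∑ᶠ k, (g (k + 2) - g (k + 1)) ^ 2 := by
  rw [finsum_eq_finsum_comp_of_support_subset_range (fun a b h => by simpa using h)
    support_bondSq_subset]
  simp [bondSq]

lemma hasFiniteSupport_bondSq (hg : HasFiniteSupport g) : HasFiniteSupport (bondSq g) := by
  refine HasFiniteSupport.of_comp_of_support_subset_range ?_ support_bondSq_subset
  have hcomp : bondSq g ∘ (fun k => (k + 1, k + 2)) = fun k => (g (k + 2) - g (k + 1)) ^ 2 := by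
    funext k; simp [bondSq]
  rw [hcomp]
  fun_prop (disch := (try intro x y h); simp_all)

theorem finsum_nearestNeighbour_sq (hg : HasFiniteSupport g) :
    ∑ᶠ p : ℕ × ℕ, (if 1 ≤ p.1 ∧ 1 ≤ p.2 ∧ (p.2 = p.1 + 1 ∨ p.1 = p.2 + 1)
        then (g p.2 - g p.1) ^ 2 else 0)
      = 2 * ∑ᶠ k, (g (k + 2) - g (k + 1)) ^ 2 := by
  have hsplit : ∀ p : ℕ × ℕ, (if 1 ≤ p.1 ∧ 1 ≤ p.2 ∧ (p.2 = p.1 + 1 ∨ p.1 = p.2 + 1)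
      then (g p.2 - g p.1) ^ 2 else 0) = bondSq g p + bondSq g p.swap := fun p => by
    simp only [bondSq, Prod.fst_swap, Prod.snd_swap]
    split_ifs <;> first | omega | ring
  have hfin := hasFiniteSupport_bondSq hg
  rw [finsum_congr hsplit,
    finsum_add_distrib hfin (hfin.fun_comp_of_injective Prod.swap_injective),
    finsum_comp Prod.swap Prod.swap_bijective, finsum_bondSq]
  ring

end Gap

/-- Action of the exchange generator on the barred function, and the resulting two-sided
comparison of the Dirichlet form `Σ F̄ (-𝔖F)^bar` with `Σ_{x,y≥1,|x-y|=1} (F̄(y)-F̄(x))²`. -/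
theorem stmt11 :
    (∀ F : ℤ → ℤ → ℝ, (∀ x y, F x y = F y x) →
      (Function.support (fun p : ℤ × ℤ => F p.1 p.2)).Finite →
      barOf (exchGen F) 0 = 0 ∧
      barOf (exchGen F) 1 = 2 * (barOf F 2 - barOf F 1) ∧
      ∀ α : ℕ, 2 ≤ α →
        barOf (exchGen F) α
          = 2 * (barOf F (α + 1) - barOf F α) + 2 * (barOf F (α - 1) - barOf F α)) ∧
    ∃ C : ℝ, 0 < C ∧ ∀ F : ℤ → ℤ → ℝ, (∀ x y, F x y = F y x) →
      (Function.support (fun p : ℤ × ℤ => F p.1 p.2)).Finite →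
      C⁻¹ * (∑ᶠ p : ℕ × ℕ,
          if 1 ≤ p.1 ∧ 1 ≤ p.2 ∧ (p.2 = p.1 + 1 ∨ p.1 = p.2 + 1)
          then (barOf F p.2 - barOf F p.1) ^ 2 else 0)
        ≤ ∑ᶠ α : ℕ, barOf F α * (-(barOf (exchGen F) α)) ∧
      (∑ᶠ α : ℕ, barOf F α * (-(barOf (exchGen F) α)))
        ≤ C * (∑ᶠ p : ℕ × ℕ,
          if 1 ≤ p.1 ∧ 1 ≤ p.2 ∧ (p.2 = p.1 + 1 ∨ p.1 = p.2 + 1)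
          then (barOf F p.2 - barOf F p.1) ^ 2 else 0) := by
  refine ⟨fun F _ hF => ?_, 1, one_pos, fun F _ hF => ?_⟩
  · rw [barOf_exchGen hF]
    refine ⟨rfl, rfl, fun α hα => ?_⟩
    obtain ⟨n, rfl⟩ := Nat.exists_eq_add_of_le' hα
    rfl
  · have hg := hasFiniteSupport_barOf hF
    rw [barOf_exchGen hF, finsum_mul_neg_gapGen hg, finsum_nearestNeighbour_sq hg]
    norm_num
end

section
/- Let φ: ℝ → (0,1) be twice continuously differentiable, nonincreasing, with φ(u) = e^{λ(1-u)} for u ≥ 2 and φ(u) = (1+λ+λ²/2)e^{-λ} for u ≤ 1, where 0 < λ < 1, satisfying 0 ≤ -φ'(u) ≤ λφ(u) and φ(u) ≥ e^{-λ(1+u)} for u > 0. Then the function f(x,σ) = ∫_ℝ φ(|x-y|/σ) e^{-2λ|y|} dy (for x ∈ ℝ, σ ≥ 1) satisfies c₁ exp(-λ|x|/σ) ≤ f(x,σ) ≤ c₂ exp(-λ|x|/σ) for constants c₁, c₂ > 0 depending only on λ. -/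
open Real MeasureTheory Set

/-! For `σ ≥ 1` the triangle inequality gives `|x|/σ - |y| ≤ |x - y|/σ ≤ |x|/σ + |y|`, and on
`[0, ∞)` the profile satisfies `e^{-λ} e^{-λu} ≤ φ u ≤ (e^λ/λ) e^{-λu}`. Hence the integrand
lies between `e^{-λ} e^{-λ|x|/σ} e^{-3λ|y|}` and `(e^λ/λ) e^{-λ|x|/σ} e^{-λ|y|}`, and integrating
with `∫ e^{-a|y|} dy = 2/a` gives the claim with `c₁ = 2e^{-λ}/(3λ)` and `c₂ = 2e^λ/λ²`. -/

theorem integral_exp_neg_mul_abs {a : ℝ} (ha : 0 < a) :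
    ∫ y : ℝ, exp (-a * |y|) = 2 / a := by
  rw [integral_comp_abs (f := fun t => exp (-a * t)), integral_exp_mul_Ioi (by linarith) 0]
  field_simp
  simp

theorem integrable_exp_neg_mul_abs {a : ℝ} (ha : 0 < a) :
    Integrable fun y : ℝ => exp (-a * |y|) :=
  .of_integral_ne_zero (by rw [integral_exp_neg_mul_abs ha]; positivity)

theorem integral_mem_Icc_of_le_of_le {F : ℝ → ℝ} (hF : AEStronglyMeasurable F)
    {A B a b : ℝ} (hA : 0 ≤ A) (ha : 0 < a) (hb : 0 < b)
    (hlow : ∀ y, A * exp (-a * |y|) ≤ F y) (hup : ∀ y, F y ≤ B * exp (-b * |y|)) :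
    ∫ y, F y ∈ Icc (A * (2 / a)) (B * (2 / b)) := by
  have hlow_int := (integrable_exp_neg_mul_abs ha).const_mul A
  have hup_int := (integrable_exp_neg_mul_abs hb).const_mul B
  have hF_int : Integrable F := hup_int.mono' hF <| .of_forall fun y => by
    rw [Real.norm_of_nonneg ((by positivity : 0 ≤ A * exp (-a * |y|)).trans (hlow y))]
    exact hup y
  constructor
  · calc A * (2 / a) = ∫ y, A * exp (-a * |y|) := by
          rw [integral_const_mul, integral_exp_neg_mul_abs ha]
      _ ≤ ∫ y, F y := integral_mono hlow_int hF_int hlow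
  · calc ∫ y, F y ≤ ∫ y, B * exp (-b * |y|) := integral_mono hF_int hup_int hup
      _ = B * (2 / b) := by rw [integral_const_mul, integral_exp_neg_mul_abs hb]

theorem abs_div_sub_abs_le_abs_sub_div {σ : ℝ} (hσ : 1 ≤ σ) (x y : ℝ) :
    |x| / σ - |y| ≤ |x - y| / σ := by
  have hy : |y| / σ ≤ |y| := div_le_self (abs_nonneg y) hσ
  have hxy : (|x| - |y|) / σ ≤ |x - y| / σ := by gcongr; exact abs_sub_abs_le_abs_sub x y
  rw [sub_div] at hxy
  linarith

theorem abs_sub_div_le_abs_div_add_abs {σ : ℝ} (hσ : 1 ≤ σ) (x y : ℝ) :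
    |x - y| / σ ≤ |x| / σ + |y| := by
  have hy : |y| / σ ≤ |y| := div_le_self (abs_nonneg y) hσ
  have hxy : |x - y| / σ ≤ (|x| + |y|) / σ := by gcongr; exact abs_sub x y
  rw [add_div] at hxy
  linarith

section Profile

variable {lam : ℝ} {φ : ℝ → ℝ}

theorem le_exp_div_mul_exp_neg_mul (hlam : 0 < lam) (hφ1 : ∀ u, φ u < 1)
    (hφ : ∀ u, 0 < u → lam * φ u ≤ exp (lam * (1 - u))) {u : ℝ} (hu : 0 ≤ u) :
    φ u ≤ exp lam / lam * exp (-lam * u) := by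
  rcases hu.eq_or_lt with rfl | hu
  · have : 1 ≤ exp lam / lam := by
      rw [one_le_div hlam]; linarith [add_one_le_exp lam]
    simpa using (hφ1 0).le.trans this
  · rw [div_mul_eq_mul_div, le_div_iff₀' hlam, ← exp_add]
    exact (hφ u hu).trans_eq (by ring_nf)

theorem exp_neg_mul_exp_neg_mul_le (hlam : 0 < lam)
    (hφ0 : φ 0 = (1 + lam + lam ^ 2 / 2) * exp (-lam))
    (hφ : ∀ u, 0 < u → exp (-lam * (1 + u)) ≤ φ u) {u : ℝ} (hu : 0 ≤ u) :
    exp (-lam) * exp (-lam * u) ≤ φ u := by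
  rcases hu.eq_or_lt with rfl | hu
  · rw [hφ0, mul_zero, exp_zero, mul_one]
    exact le_mul_of_one_le_left (exp_pos _).le (by nlinarith)
  · exact (hφ u hu).trans_eq' (by rw [← exp_add]; ring_nf)

variable {x σ : ℝ}

theorem mul_exp_le_apply_mul_exp (hlam : 0 ≤ lam) (hσ : 1 ≤ σ) {c : ℝ} (hc : 0 ≤ c)
    (hφ : ∀ u, 0 ≤ u → c * exp (-lam * u) ≤ φ u) (y : ℝ) :
    c * exp (-lam * |x| / σ) * exp (-(3 * lam) * |y|)
      ≤ φ (|x - y| / σ) * exp (-2 * lam * |y|) := by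
  have hu : 0 ≤ |x - y| / σ := by positivity
  calc c * exp (-lam * |x| / σ) * exp (-(3 * lam) * |y|)
      ≤ c * exp (-lam * (|x - y| / σ)) * exp (-2 * lam * |y|) := by
        simp only [mul_assoc, ← exp_add]
        refine mul_le_mul_of_nonneg_left (exp_le_exp.mpr ?_) hc
        have := mul_le_mul_of_nonneg_left (abs_sub_div_le_abs_div_add_abs hσ x y) hlam
        ring_nf at this ⊢
        linarith
    _ ≤ φ (|x - y| / σ) * exp (-2 * lam * |y|) := by gcongr; exact hφ _ hu

theorem apply_mul_exp_le_mul_exp (hlam : 0 ≤ lam) (hσ : 1 ≤ σ) {C : ℝ} (hC : 0 ≤ C)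
    (hφ : ∀ u, 0 ≤ u → φ u ≤ C * exp (-lam * u)) (y : ℝ) :
    φ (|x - y| / σ) * exp (-2 * lam * |y|)
      ≤ C * exp (-lam * |x| / σ) * exp (-lam * |y|) := by
  have hu : 0 ≤ |x - y| / σ := by positivity
  calc φ (|x - y| / σ) * exp (-2 * lam * |y|)
      ≤ C * exp (-lam * (|x - y| / σ)) * exp (-2 * lam * |y|) := by gcongr; exact hφ _ hu
    _ ≤ C * exp (-lam * |x| / σ) * exp (-lam * |y|) := by
        simp only [mul_assoc, ← exp_add]
        refine mul_le_mul_of_nonneg_left (exp_le_exp.mpr ?_) hC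
        have := mul_le_mul_of_nonneg_left (abs_div_sub_abs_le_abs_sub_div hσ x y) hlam
        ring_nf at this ⊢
        linarith

end Profile

theorem stmt19_general (lam : ℝ) (hlam0 : 0 < lam) :
    ∃ c₁ c₂ : ℝ, 0 < c₁ ∧ 0 < c₂ ∧
      ∀ φ : ℝ → ℝ, ContDiff ℝ 2 φ → Antitone φ →
        (∀ u : ℝ, 0 < φ u ∧ φ u < 1) →
        (∀ u : ℝ, 2 ≤ u → φ u = Real.exp (lam * (1 - u))) →
        (∀ u : ℝ, u ≤ 1 → φ u = (1 + lam + lam ^ 2 / 2) * Real.exp (-lam)) →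
        (∀ u : ℝ, 0 < u →
          0 ≤ -deriv φ u ∧ -deriv φ u ≤ lam * φ u ∧
          lam * φ u ≤ Real.exp (lam * (1 - u)) ∧ Real.exp (-lam * (1 + u)) ≤ φ u) →
        ∀ x σ : ℝ, 1 ≤ σ →
          c₁ * Real.exp (-lam * |x| / σ)
            ≤ (∫ y : ℝ, φ (|x - y| / σ) * Real.exp (-2 * lam * |y|)) ∧
          (∫ y : ℝ, φ (|x - y| / σ) * Real.exp (-2 * lam * |y|))
            ≤ c₂ * Real.exp (-lam * |x| / σ) := by
  refine ⟨exp (-lam) * (2 / (3 * lam)), exp lam / lam * (2 / lam), by positivity, by positivity,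
    fun φ hφC2 _ hφ01 _ hφconst hφdecay x σ hσ => ?_⟩
  have hφ_cont : Continuous φ := hφC2.continuous
  have hlow := mul_exp_le_apply_mul_exp (x := x) hlam0.le hσ (exp_pos _).le
    fun _ => exp_neg_mul_exp_neg_mul_le hlam0 (hφconst 0 zero_le_one) fun u hu =>
      (hφdecay u hu).2.2.2
  have hup := apply_mul_exp_le_mul_exp (x := x) hlam0.le hσ (by positivity)
    fun _ => le_exp_div_mul_exp_neg_mul hlam0 (fun u => (hφ01 u).2) fun u hu =>
      (hφdecay u hu).2.2.1
  obtain ⟨hge, hle⟩ := integral_mem_Icc_of_le_of_le (by fun_prop) (by positivity)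
    (by positivity) hlam0 hlow hup
  exact ⟨le_of_eq_of_le (by ring) hge, hle.trans_eq (by ring)⟩

/-- For the cutoff function `φ` (C², nonincreasing, equal to `e^{λ(1-u)}` for `u ≥ 2` and
constant for `u ≤ 1`, with the stated derivative and lower bounds), the smoothed weight
`f(x,σ) = ∫ φ(|x-y|/σ) e^{-2λ|y|} dy` satisfies
`c₁ e^{-λ|x|/σ} ≤ f(x,σ) ≤ c₂ e^{-λ|x|/σ}` with constants depending only on `λ`. -/
theorem stmt19 (lam : ℝ) (hlam0 : 0 < lam) (hlam1 : lam < 1) :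
    ∃ c₁ c₂ : ℝ, 0 < c₁ ∧ 0 < c₂ ∧
      ∀ φ : ℝ → ℝ, ContDiff ℝ 2 φ → Antitone φ →
        (∀ u : ℝ, 0 < φ u ∧ φ u < 1) →
        (∀ u : ℝ, 2 ≤ u → φ u = Real.exp (lam * (1 - u))) →
        (∀ u : ℝ, u ≤ 1 → φ u = (1 + lam + lam ^ 2 / 2) * Real.exp (-lam)) →
        (∀ u : ℝ, 0 < u →
          0 ≤ -deriv φ u ∧ -deriv φ u ≤ lam * φ u ∧
          lam * φ u ≤ Real.exp (lam * (1 - u)) ∧ Real.exp (-lam * (1 + u)) ≤ φ u) →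
        ∀ x σ : ℝ, 1 ≤ σ →
          c₁ * Real.exp (-lam * |x| / σ)
            ≤ (∫ y : ℝ, φ (|x - y| / σ) * Real.exp (-2 * lam * |y|)) ∧
          (∫ y : ℝ, φ (|x - y| / σ) * Real.exp (-2 * lam * |y|))
            ≤ c₂ * Real.exp (-lam * |x| / σ) :=
  stmt19_general lam hlam0
end
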